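/- Let T : ℕ → ℝ≥0 satisfy: there exists c > 0 such that for all n ≥ n₀, T(n) ≤ c·n + T(n₁) + T(n₂) for some n₁, n₂ with n₁ + n₂ = n - 1 and max(n₁, n₂) ≤ (2/3)n + 2. Then T(n) = O(n log n), i.e., there exist constants C and N such that T(n) ≤ C·n·log n for all n ≥ N. -/

import Mathlib

/-!
Split off a constant for the base cases and prove `T n ≤ B + C n log n` by strong induction.
Since both pieces have size at most `a n` with `a < 1` (here `a = 3/4` once `n ≥ 24`), each
piece loses at least `log a⁻¹` in its logarithm, so the pieces together save
`C (n - 1) log a⁻¹`; choosing `C log a⁻¹ = 2 (c + B)` pays for the linear cost `c n` and for the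
extra base constant `B`. Finally `B ≤ n log n` for large `n`.
-/

open Real Filter

lemma mul_log_le_mul_log_of_le {x y : ℝ} (hx : 0 ≤ x) (h : x ≤ y) :
    x * log x ≤ x * log y := by
  rcases hx.eq_or_lt with rfl | hx
  · simp
  · exact mul_le_mul_of_nonneg_left (log_le_log hx h) hx.le

lemma add_mul_log_le_of_le_mul {x₁ x₂ y a : ℝ} (h₁ : 0 ≤ x₁) (h₂ : 0 ≤ x₂) (ha : 0 < a)
    (hy : 0 < y) (hx₁ : x₁ ≤ a * y) (hx₂ : x₂ ≤ a * y) :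
    x₁ * log x₁ + x₂ * log x₂ ≤ (x₁ + x₂) * (log y - log a⁻¹) := by
  have hlog : log (a * y) = log y - log a⁻¹ := by
    rw [log_mul ha.ne' hy.ne', log_inv]; ring
  rw [← hlog, add_mul]
  exact add_le_add (mul_log_le_mul_log_of_le h₁ hx₁) (mul_log_le_mul_log_of_le h₂ hx₂)

theorem le_const_add_mul_mul_log_of_split {T : ℕ → ℝ} {a c B : ℝ} {N : ℕ}
    (ha₀ : 0 < a) (ha₁ : a < 1) (hc : 0 ≤ c) (hB : 0 ≤ B) (hN : 2 ≤ N)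
    (hbase : ∀ n < N, T n ≤ B)
    (hsplit : ∀ n, N ≤ n → ∃ n₁ n₂ : ℕ, n₁ + n₂ + 1 = n ∧ (n₁ : ℝ) ≤ a * n ∧
      (n₂ : ℝ) ≤ a * n ∧ T n ≤ c * n + T n₁ + T n₂) (n : ℕ) :
    T n ≤ B + 2 * (c + B) / log a⁻¹ * n * log n := by
  have hL : 0 < log a⁻¹ := log_pos (one_lt_inv_iff₀.mpr ⟨ha₀, ha₁⟩)
  set C := 2 * (c + B) / log a⁻¹
  have hC : 0 ≤ C := by positivity
  have hCL : C * log a⁻¹ = 2 * (c + B) := div_mul_cancel₀ _ hL.ne'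
  induction n using Nat.strong_induction_on with
  | _ n ih =>
    have hlog : 0 ≤ log n := log_natCast_nonneg n
    rcases lt_or_ge n N with hn | hn
    · have : 0 ≤ C * n * log n := by positivity
      linarith [hbase n hn]
    obtain ⟨n₁, n₂, hsum, hn₁, hn₂, hT⟩ := hsplit n hn
    have hsumR : (n₁ : ℝ) + n₂ = n - 1 := by
      rw [← hsum]; push_cast; ring
    have hn2 : (2 : ℝ) ≤ n := by exact_mod_cast hN.trans hn
    have hpieces := add_mul_log_le_of_le_mul (Nat.cast_nonneg n₁) (Nat.cast_nonneg n₂) ha₀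
      (by linarith) hn₁ hn₂
    rw [hsumR] at hpieces
    have ih₁ := ih n₁ (by omega)
    have ih₂ := ih n₂ (by omega)
    have hpay : c * n + B ≤ C * log a⁻¹ * (n - 1) := by
      rw [hCL]; nlinarith
    have hmono : C * (n - 1) * log n ≤ C * n * log n := by
      have := mul_nonneg hC hlog
      nlinarith
    nlinarith [mul_le_mul_of_nonneg_left hpieces hC]

lemma eventually_le_natCast_mul_log (B : ℝ) : ∀ᶠ n : ℕ in atTop, B ≤ n * log n :=
  (tendsto_natCast_atTop_atTop.atTop_mul_atTop₀
    (tendsto_log_atTop.comp tendsto_natCast_atTop_atTop)).eventually_ge_atTop B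

/-- Divide-and-conquer recurrence: if `T : ℕ → ℝ≥0` satisfies, for some `c > 0` and
threshold `n₀`, that every `n ≥ n₀` splits as `T n ≤ c·n + T n₁ + T n₂` with
`n₁ + n₂ = n - 1` and `max n₁ n₂ ≤ (2/3)·n + 2`, then `T n = O(n log n)`:
there are constants `C` and `N` with `T n ≤ C · n · log n` for all `n ≥ N`. -/
theorem recurrence_n_log_n (T : ℕ → NNReal) (c : ℝ) (hc : 0 < c) (n₀ : ℕ)
    (hrec : ∀ n : ℕ, n₀ ≤ n → ∃ n₁ n₂ : ℕ, n₁ + n₂ = n - 1 ∧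
      (max n₁ n₂ : ℝ) ≤ (2 / 3 : ℝ) * n + 2 ∧
      (T n : ℝ) ≤ c * n + T n₁ + T n₂) :
    ∃ C : ℝ, ∃ N : ℕ, ∀ n : ℕ, N ≤ n → (T n : ℝ) ≤ C * n * Real.log n := by
  set N := max n₀ 24
  set B := ∑ k ∈ Finset.range N, (T k : ℝ)
  have hbase (n : ℕ) (hn : n < N) : (T n : ℝ) ≤ B :=
    Finset.single_le_sum (fun k _ => (T k).coe_nonneg) (Finset.mem_range.mpr hn)
  have hsplit (n : ℕ) (hn : N ≤ n) : ∃ n₁ n₂ : ℕ, n₁ + n₂ + 1 = n ∧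
      (n₁ : ℝ) ≤ 3 / 4 * n ∧ (n₂ : ℝ) ≤ 3 / 4 * n ∧ (T n : ℝ) ≤ c * n + T n₁ + T n₂ := by
    obtain ⟨n₁, n₂, hsum, hmax, hT⟩ := hrec n (le_of_max_le_left hn)
    have h24 : (24 : ℝ) ≤ n := by exact_mod_cast le_of_max_le_right hn
    have hmax' : (max n₁ n₂ : ℝ) ≤ 3 / 4 * n := by linarith
    exact ⟨n₁, n₂, by omega, (le_max_left _ _).trans hmax', (le_max_right _ _).trans hmax', hT⟩
  have hbound := le_const_add_mul_mul_log_of_split (by norm_num) (by norm_num) hc.le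
    (Finset.sum_nonneg fun k _ => (T k).coe_nonneg) (le_max_of_le_right (by norm_num))
    hbase hsplit
  obtain ⟨N', hN'⟩ := eventually_atTop.mp (eventually_le_natCast_mul_log B)
  refine ⟨2 * (c + B) / log (3 / 4 : ℝ)⁻¹ + 1, N', fun n hn => ?_⟩
  linarith [hbound n, hN' n hn]
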